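/- Let X be a nonempty set, k a field of characteristic 0, N : X × X → ℕ, and M ∈ ℕ with N(a,b) ≤ M for all a,b ∈ X. Then for all x,y ∈ X, all l ≥ 1, and all n,m ∈ ℤ, the polynomial d^l( f^{0,0}_{x,y}(n,m; 3M) ) belongs to the ideal I(N). -/

import Mathlib

/-! The Leibniz rule gives `d f^{0,0}_{x,y} = f^{1,0}_{x,y} + f^{0,1}_{x,y}`, and reversing the
summation shows that `f^{0,1}_{x,y}` is `±f^{1,0}_{y,x}` with shifted indices. Pascal's rule gives
`f(n,m;L+1) = f(n,m;L) - f(n-1,m+1;L)`, so `f^{1,0}_{a,b}(n,m;L) ∈ I(N)` for every `L ≥ N(a,b)`.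
Finally `I(N)` is stable under `d`, since its set of generators is. -/

noncomputable section

/-- The polynomial algebra `F = k[B^(ω)]` in the variables `a^(p)(n)`
(`a ∈ X`, `p ∈ ℕ`, `n ∈ ℤ`), encoded as triples `(a, p, n)`. -/
abbrev FreeDiffAlg (k X : Type*) [CommRing k] : Type _ :=
  MvPolynomial (X × ℕ × ℤ) k

/-- The derivation `d : F → F` determined by `d(a^(p)(n)) = a^(p+1)(n)`. -/
def derD (k X : Type*) [CommRing k] :
    Derivation k (FreeDiffAlg k X) (FreeDiffAlg k X) :=
  MvPolynomial.mkDerivation k fun v : X × ℕ × ℤ =>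
    MvPolynomial.X (v.1, v.2.1 + 1, v.2.2)

/-- The weight of the variable `a^(p)(n)` is `p - 1`. -/
def wtVar {X : Type*} (v : X × ℕ × ℤ) : ℤ := (v.2.1 : ℤ) - 1

/-- `F_w`: the `k`-span of the monomials of weight `w` (the weight of a monomial
is the sum of the weights of its variables, counted with multiplicity). -/
def Fwt (k X : Type*) [CommRing k] (w : ℤ) : Submodule k (FreeDiffAlg k X) :=
  MvPolynomial.weightedHomogeneousSubmodule k (wtVar (X := X)) w

/-- The weight of a monomial (given by its exponent function). -/
def wtMon {X : Type*} (s : (X × ℕ × ℤ) →₀ ℕ) : ℤ :=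
  s.sum fun v c => (c : ℤ) * wtVar v

/-- `f^{p,q}_{a,b}(n, m; L) = Σ_{t=0}^{L} (−1)^t C(L,t) a^(p)(n−t) b^(q)(m+t)`. -/
def fpq (k : Type*) {X : Type*} [CommRing k] (a b : X) (p q : ℕ)
    (n m : ℤ) (L : ℕ) : FreeDiffAlg k X :=
  ∑ t ∈ Finset.range (L + 1),
    ((-1 : k) ^ t * (L.choose t : k)) •
      (MvPolynomial.X (a, p, n - (t : ℤ)) * MvPolynomial.X (b, q, m + (t : ℤ)))

/-- The ideal `I(N)` generated by all `d^l(f_{a,b}(n,m))`,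
where `f_{a,b}(n,m) = f^{1,0}_{a,b}(n, m; N(a,b))`. -/
def idealI (k : Type*) {X : Type*} [CommRing k] (N : X × X → ℕ) :
    Ideal (FreeDiffAlg k X) :=
  Ideal.span { g | ∃ (a b : X) (n m : ℤ) (l : ℕ),
    g = (⇑(derD k X))^[l] (fpq k a b 1 0 n m (N (a, b))) }

/-- The ideal `K(N̄)` generated by all `d^l(f^{p,q}_{a,b}(n, m; N̄((a,p),(b,q))))`. -/
def idealK (k : Type*) {X : Type*} [CommRing k]
    (Nbar : (X × ℕ) × (X × ℕ) → ℕ) : Ideal (FreeDiffAlg k X) :=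
  Ideal.span { g | ∃ (a b : X) (p q l : ℕ) (n m : ℤ),
    g = (⇑(derD k X))^[l] (fpq k a b p q n m (Nbar ((a, p), (b, q)))) }

open Finset

section AlternatingBinomialSum

variable (R : Type*) {G : Type*} [CommRing R] [AddCommGroup G] [Module R G]

/-- `(-1)^L` times the `L`-th forward difference of `g` at `0`. -/
def altChooseSum (L : ℕ) (g : ℕ → G) : G :=
  ∑ t ∈ range (L + 1), ((-1 : R) ^ t * (L.choose t : R)) • g t

variable {R}

theorem altChooseSum_eq_sum_succ_add (L : ℕ) (g : ℕ → G) :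
    altChooseSum R L g =
      ∑ t ∈ range (L + 1), ((-1 : R) ^ (t + 1) * (L.choose (t + 1) : R)) • g (t + 1) + g 0 := by
  rw [altChooseSum, sum_range_succ', sum_range_succ _ L]
  simp

theorem altChooseSum_succ (L : ℕ) (g : ℕ → G) :
    altChooseSum R (L + 1) g = altChooseSum R L g - altChooseSum R L (fun t => g (t + 1)) := by
  have pascal : ∀ t, ((-1 : R) ^ (t + 1) * ((L + 1).choose (t + 1) : R)) =
      (-1) ^ (t + 1) * (L.choose (t + 1) : R) - (-1) ^ t * (L.choose t : R) := by
    intro t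
    rw [Nat.choose_succ_succ', Nat.cast_add]
    ring
  rw [altChooseSum, sum_range_succ', altChooseSum_eq_sum_succ_add, altChooseSum]
  simp only [pascal, sub_smul, sum_sub_distrib, Nat.choose_zero_right, pow_zero, Nat.cast_one,
    mul_one, one_smul]
  abel

theorem altChooseSum_reflect (L : ℕ) (g : ℕ → G) :
    altChooseSum R L g = (-1 : R) ^ L • altChooseSum R L (fun t => g (L - t)) := by
  unfold altChooseSum
  rw [smul_sum, ← sum_range_reflect]
  refine sum_congr rfl fun t ht => ?_
  have htL : t ≤ L := Nat.lt_succ_iff.mp (mem_range.mp ht)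
  have sign : (-1 : R) ^ L * (-1) ^ t = (-1) ^ (L - t) := by
    conv_lhs => rw [← Nat.sub_add_cancel htL]
    rw [pow_add, mul_assoc, ← mul_pow, neg_one_mul, neg_neg, one_pow, mul_one]
  rw [add_tsub_cancel_right, Nat.choose_symm htL, smul_smul, ← mul_assoc, sign]

end AlternatingBinomialSum

section FreeDiffAlg

variable {k X : Type*} [CommRing k]

theorem fpq_eq_altChooseSum (a b : X) (p q : ℕ) (n m : ℤ) (L : ℕ) :
    fpq k a b p q n m L = altChooseSum k L
      (fun t => MvPolynomial.X (a, p, n - (t : ℤ)) * MvPolynomial.X (b, q, m + (t : ℤ))) :=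
  rfl

theorem fpq_succ (a b : X) (p q : ℕ) (n m : ℤ) (L : ℕ) :
    fpq k a b p q n m (L + 1) = fpq k a b p q n m L - fpq k a b p q (n - 1) (m + 1) L := by
  simp only [fpq_eq_altChooseSum, altChooseSum_succ, Nat.cast_succ]
  congr! 4 with t <;> congr 3 <;> ring

theorem fpq_swap (a b : X) (p q : ℕ) (n m : ℤ) (L : ℕ) :
    fpq k a b p q n m L = (-1 : k) ^ L • fpq k b a q p (m + L) (n - L) L := by
  rw [fpq_eq_altChooseSum, altChooseSum_reflect, fpq_eq_altChooseSum]
  congr 1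
  refine sum_congr rfl fun t ht => ?_
  have htL : t ≤ L := Nat.lt_succ_iff.mp (mem_range.mp ht)
  dsimp only
  rw [Nat.cast_sub htL, mul_comm (MvPolynomial.X _)]
  congr 5 <;> ring

theorem derD_X (a : X) (p : ℕ) (n : ℤ) :
    derD k X (MvPolynomial.X (a, p, n)) = MvPolynomial.X (a, p + 1, n) :=
  MvPolynomial.mkDerivation_X k _ _

theorem derD_fpq (a b : X) (p q : ℕ) (n m : ℤ) (L : ℕ) :
    derD k X (fpq k a b p q n m L) = fpq k a b (p + 1) q n m L + fpq k a b p (q + 1) n m L := by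
  unfold fpq
  rw [map_sum, ← sum_add_distrib]
  refine sum_congr rfl fun t _ => ?_
  rw [Derivation.map_smul, Derivation.leibniz, derD_X, derD_X, ← smul_add, smul_eq_mul,
    smul_eq_mul]
  congr 1
  ring

theorem fpq_mem_of_le {S : Type*} [SetLike S (FreeDiffAlg k X)]
    [AddSubgroupClass S (FreeDiffAlg k X)] (J : S) (a b : X) (p q : ℕ) {L₀ L : ℕ} (hL : L₀ ≤ L) (h : ∀ n m, fpq k a b p q n m L₀ ∈ J) (n m : ℤ) :
    fpq k a b p q n m L ∈ J := by
  induction L, hL using Nat.le_induction generalizing n m with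
  | base => exact h n m
  | succ L _ ih => rw [fpq_succ]; exact sub_mem (ih n m) (ih (n - 1) (m + 1))

theorem Derivation.map_mem_span {R A : Type*} [CommSemiring R] [CommSemiring A] [Algebra R A]
    (D : Derivation R A A) {S : Set A} (hS : ∀ s ∈ S, D s ∈ Ideal.span S) {x : A}
    (hx : x ∈ Ideal.span S) : D x ∈ Ideal.span S := by
  induction hx using Submodule.span_induction with
  | mem s hs => exact hS s hs
  | zero => simp
  | add x y _ _ hx hy => rw [map_add]; exact add_mem hx hy
  | smul c x hx hDx =>
    rw [smul_eq_mul, Derivation.leibniz, smul_eq_mul, smul_eq_mul]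
    exact add_mem (Ideal.mul_mem_left _ _ hDx) (Ideal.mul_mem_right _ _ hx)

theorem mapsTo_derD_idealI (N : X × X → ℕ) :
    Set.MapsTo (derD k X) (idealI k N) (idealI k N) := by
  refine fun _ => (derD k X).map_mem_span ?_
  rintro _ ⟨a, b, n, m, l, rfl⟩
  exact Ideal.subset_span ⟨a, b, n, m, l + 1, (Function.iterate_succ_apply' _ _ _).symm⟩

theorem fpq_one_zero_mem_idealI (N : X × X → ℕ) {a b : X} {L : ℕ} (hL : N (a, b) ≤ L)
    (n m : ℤ) : fpq k a b 1 0 n m L ∈ idealI k N :=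
  fpq_mem_of_le (idealI k N) a b 1 0 hL (fun n m => Ideal.subset_span ⟨a, b, n, m, 0, rfl⟩) n m

theorem fpq_zero_one_mem_idealI (N : X × X → ℕ) {a b : X} {L : ℕ} (hL : N (b, a) ≤ L)
    (n m : ℤ) : fpq k a b 0 1 n m L ∈ idealI k N := by
  rw [fpq_swap, MvPolynomial.smul_eq_C_mul]
  exact Ideal.mul_mem_left _ _ (fpq_one_zero_mem_idealI N hL _ _)

end FreeDiffAlg

theorem iterate_derD_fpq_zero_zero_mem_idealI_general
    (k X : Type*) [Field k]
    (N : X × X → ℕ) (M : ℕ) (hM : ∀ a b : X, N (a, b) ≤ M)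
    (x y : X) (l : ℕ) (hl : 1 ≤ l) (n m : ℤ) :
    (⇑(derD k X))^[l] (fpq k x y 0 0 n m (3 * M)) ∈ idealI k N := by
  obtain ⟨l, rfl⟩ := Nat.exists_eq_add_of_le' hl
  rw [Function.iterate_succ_apply, derD_fpq]
  refine (mapsTo_derD_idealI N).iterate l (add_mem ?_ ?_)
  · exact fpq_one_zero_mem_idealI N (by linarith [hM x y]) n m
  · exact fpq_zero_one_mem_idealI N (by linarith [hM y x]) n m

/-- `d^l(f^{0,0}_{x,y}(n, m; 3M)) ∈ I(N)` for `l ≥ 1`. -/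
theorem iterate_derD_fpq_zero_zero_mem_idealI
    (k X : Type*) [Field k] [CharZero k] [Nonempty X]
    (N : X × X → ℕ) (M : ℕ) (hM : ∀ a b : X, N (a, b) ≤ M)
    (x y : X) (l : ℕ) (hl : 1 ≤ l) (n m : ℤ) :
    (⇑(derD k X))^[l] (fpq k x y 0 0 n m (3 * M)) ∈ idealI k N :=
  iterate_derD_fpq_zero_zero_mem_idealI_general k X N M hM x y l hl n m
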